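/- arXiv:2402.17552 — 3 statements merged into one kernel-verified Lean document; each statement's English description precedes it below -/
import Mathlib

section
/- Let T ∈ L(H) be trace class and let V, B₀ ∈ L(H) with ran B₀ ⊆ ran V, and suppose T(ker V) is a nonnegative subspace of H. Let P ∈ L(H) be the Hilbert-space orthogonal projection onto ker V and let D ∈ L(H) be the reduced Douglas solution of VX = B₀ (the unique D with VD = B₀ and ran D ⊆ (ker V)^⊥). The following are equivalent: (i) there exists X₀ ∈ L(H) with VX₀ = B₀ such that tr_J(X₀^# T^#T X₀) ≤ tr_J(X^# T^#T X) for every X ∈ L(H) with VX = B₀; (ii) ran D ⊆ ker V + [T^#T(ker V)]^{[⊥]}; (iii) there exists Y ∈ L(H) with (J∘P∘J) ∘ T^#T ∘ (P Y + D) = 0. In this case, for any solution Y of (iii), the operator X₀ := P Y + D attains the minimum in (i), whose value is tr_J(X₀^# T^#T X₀). -/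
/-!
Write `[x, y] = ⟪J x, y⟫`. In a Hilbert basis `(bᵢ)`, `tr_J(X^# T^#T X) = ∑ᵢ [T X bᵢ, T X bᵢ]`,
which is finite because `T` is Hilbert–Schmidt. Two solutions of `V X = B₀` differ by an operator
with range in `ker V`, so expanding this sum shows, since `[·,·]` is nonnegative on `T(ker V)`,
that a solution `X₀` is a minimiser as soon as `[T X₀ x, T z] = 0` for all `x` and `z ∈ ker V`;
conversely a minimiser satisfies this, as one sees by perturbing `X₀` with the rank-one operators
`bᵢ ↦ c z`. Because `P` is the orthogonal projection onto `ker V`, this orthogonality is the normal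
equation (iii) for `X₀ = P Y + D`. Finally (ii) says that `ran D` lies in `ker V` plus the kernel of
`G = P T* J T`, i.e. `ran (G D) ⊆ ran (G P)`, so Douglas' lemma solves `G P Y = - G D`.
-/

open ContinuousLinearMap

noncomputable section

variable {H : Type*} [NormedAddCommGroup H] [InnerProductSpace ℂ H] [CompleteSpace H]

/-- The Krein adjoint `S^# = J ∘ S* ∘ J` of `S ∈ L(H)` on a Krein space with signature
operator `J`. -/
def kadj (J S : H →L[ℂ] H) : H →L[ℂ] H :=
  J ∘L (ContinuousLinearMap.adjoint S) ∘L J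

/-- `S` is a Hilbert–Schmidt operator (w.r.t. the Hilbert basis `b`; this is in fact
independent of the basis). -/
def IsHilbertSchmidt {ι : Type*} (b : HilbertBasis ι ℂ H) (S : H →L[ℂ] H) : Prop :=
  Summable fun i => ‖S (b i)‖ ^ 2

/-- `S` is trace class: it is the product of two Hilbert–Schmidt operators. -/
def IsTraceClass {ι : Type*} (b : HilbertBasis ι ℂ H) (S : H →L[ℂ] H) : Prop :=
  ∃ S₁ S₂ : H →L[ℂ] H, IsHilbertSchmidt b S₁ ∧ IsHilbertSchmidt b S₂ ∧ S = S₁ ∘L S₂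

/-- The `J`-trace `tr_J(S) = tr(J∘S)` of a (trace-class) operator `S`, computed in the
Hilbert basis `b`. -/
def trJ {ι : Type*} (J : H →L[ℂ] H) (b : HilbertBasis ι ℂ H) (S : H →L[ℂ] H) : ℝ :=
  ∑' i, (inner ℂ (J (S (b i))) (b i) : ℂ).re

/-- The operator `X^# T^#T X`. -/
def splineOp (J T X : H →L[ℂ] H) : H →L[ℂ] H :=
  kadj J X ∘L ((kadj J T ∘L T) ∘L X)

open scoped InnerProduct InnerProductSpace ComplexConjugate

theorem HilbertBasis.hasSum_norm_inner_sq {ι 𝕜 E : Type*} [RCLike 𝕜] [NormedAddCommGroup E]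
    [InnerProductSpace 𝕜 E] (b : HilbertBasis ι 𝕜 E) (x : E) :
    HasSum (fun i => ‖⟪b i, x⟫_𝕜‖ ^ 2) (‖x‖ ^ 2) := by
  convert RCLike.hasSum_re 𝕜 (b.hasSum_inner_mul_inner x x) using 1
  · ext i
    rw [← inner_conj_symm x (b i), RCLike.conj_mul]
    norm_cast
  · rw [inner_self_eq_norm_sq]

theorem ContinuousLinearMap.eq_of_mem_orthogonal_ker_of_apply_eq {𝕜 E F : Type*} [RCLike 𝕜]
    [NormedAddCommGroup E] [InnerProductSpace 𝕜 E] [NormedAddCommGroup F] [NormedSpace 𝕜 F]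
    (C : E →L[𝕜] F) {y₁ y₂ : E} (h₁ : y₁ ∈ C.kerᗮ) (h₂ : y₂ ∈ C.kerᗮ) (hC : C y₁ = C y₂) :
    y₁ = y₂ := by
  have hker : y₁ - y₂ ∈ C.ker := by simp [hC]
  rw [← sub_eq_zero, ← Submodule.mem_bot 𝕜, ← C.ker.inf_orthogonal_eq_bot]
  exact ⟨hker, C.kerᗮ.sub_mem h₁ h₂⟩

/-- Douglas' lemma: choosing the preimage in `(ker C)ᗮ` is linear and has closed graph. -/
theorem ContinuousLinearMap.exists_comp_eq_of_forall_exists_apply_eq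
    {𝕜 E F G : Type*} [RCLike 𝕜] [NormedAddCommGroup E] [InnerProductSpace 𝕜 E] [CompleteSpace E]
    [NormedAddCommGroup F] [NormedSpace 𝕜 F] [NormedAddCommGroup G] [NormedSpace 𝕜 G]
    [CompleteSpace G] (C : E →L[𝕜] F) (A : G →L[𝕜] F) (h : ∀ x, ∃ y, C y = A x) :
    ∃ Y : G →L[𝕜] E, C ∘L Y = A := by
  have hex (x : G) : ∃ y ∈ C.kerᗮ, C y = A x := by
    obtain ⟨y, hy⟩ := h x
    have hproj : C (C.ker.starProjection y) = 0 := C.ker.starProjection_apply_mem y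
    exact ⟨y - C.ker.starProjection y, C.ker.sub_starProjection_mem_orthogonal y,
      by rw [map_sub, hproj, sub_zero, hy]⟩
  choose f hfK hf using hex
  let g : G →ₗ[𝕜] E :=
    { toFun := f
      map_add' := fun x₁ x₂ => C.eq_of_mem_orthogonal_ker_of_apply_eq (hfK _)
        (C.kerᗮ.add_mem (hfK x₁) (hfK x₂)) (by simp only [map_add, hf])
      map_smul' := fun c x => C.eq_of_mem_orthogonal_ker_of_apply_eq (hfK _)
        (C.kerᗮ.smul_mem c (hfK x)) (by simp only [map_smul, hf, RingHom.id_apply]) }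
  have hgraph : (g.graph : Set (G × E)) = {p | p.2 ∈ C.kerᗮ} ∩ {p | C p.2 = A p.1} := by
    ext ⟨x, y⟩
    simp only [SetLike.mem_coe, LinearMap.mem_graph_iff, Set.mem_inter_iff, Set.mem_ofPred_eq]
    exact ⟨fun hy => hy ▸ ⟨hfK x, hf x⟩,
      fun ⟨hyK, hy⟩ => C.eq_of_mem_orthogonal_ker_of_apply_eq hyK (hfK x) (hy.trans (hf x).symm)⟩
  have hclosed : IsClosed (g.graph : Set (G × E)) := by
    rw [hgraph]
    exact (C.ker.isClosed_orthogonal.preimage continuous_snd).inter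
      (isClosed_eq (C.continuous.comp continuous_snd) (A.continuous.comp continuous_fst))
  exact ⟨⟨g, g.continuous_of_isClosed_graph hclosed⟩, ext hf⟩

/-- Take `c = -t * conj a` with `t = 1 / (|q| + 1)`: the term `2 * (c * a).re = -2 t ‖a‖²` then
outweighs `normSq c * q = t² ‖a‖² q`. -/
theorem Complex.eq_zero_of_forall_normSq_mul_add_re_nonneg {q : ℝ} {a : ℂ}
    (h : ∀ c : ℂ, 0 ≤ Complex.normSq c * q + 2 * (c * a).re) : a = 0 := by
  by_contra ha
  have hn : 0 < Complex.normSq a := Complex.normSq_pos.2 ha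
  set t : ℝ := (|q| + 1)⁻¹
  have ht : 0 < t := by positivity
  have htq : t * (|q| + 1) = 1 := inv_mul_cancel₀ (by positivity)
  have hc := h (-(t : ℂ) * conj a)
  rw [Complex.normSq_mul, Complex.normSq_neg, Complex.normSq_ofReal, Complex.normSq_conj,
    mul_assoc (-(t : ℂ)), ← Complex.normSq_eq_conj_mul_self, ← Complex.ofReal_neg,
    ← Complex.ofReal_mul, Complex.ofReal_re] at hc
  nlinarith [le_abs_self q, mul_pos ht hn, mul_pos (mul_pos ht hn) ht]

section HilbertSchmidt

variable {E ι : Type*} [NormedAddCommGroup E] [InnerProductSpace ℂ E] {b : HilbertBasis ι ℂ E}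

theorem IsHilbertSchmidt.comp_left {S : E →L[ℂ] E} (hS : IsHilbertSchmidt b S)
    (X : E →L[ℂ] E) : IsHilbertSchmidt b (X ∘L S) :=
  .of_nonneg_of_le (fun _ => by positivity)
    (fun i => by simpa [mul_pow] using pow_le_pow_left₀ (norm_nonneg _) (X.le_opNorm (S (b i))) 2)
    (hS.mul_left (‖X‖ ^ 2))

variable [CompleteSpace E]

/-- Both `∑ᵢ ‖S bᵢ‖²` and `∑ⱼ ‖S† bⱼ‖²` are the double sum `∑ᵢⱼ |⟪bⱼ, S bᵢ⟫|²`. -/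
theorem IsHilbertSchmidt.adjoint {S : E →L[ℂ] E} (hS : IsHilbertSchmidt b S) :
    IsHilbertSchmidt b (S†) := by
  have hrow (i : ι) : HasSum (fun j => ‖⟪b j, S (b i)⟫_ℂ‖ ^ 2) (‖S (b i)‖ ^ 2) :=
    b.hasSum_norm_inner_sq _
  have hcol (j : ι) : HasSum (fun i => ‖⟪b j, S (b i)⟫_ℂ‖ ^ 2) (‖(S†) (b j)‖ ^ 2) := by
    convert b.hasSum_norm_inner_sq ((S†) (b j)) using 2 with i
    rw [adjoint_inner_right, norm_inner_symm]
  have hprod : Summable fun p : ι × ι => ‖⟪b p.2, S (b p.1)⟫_ℂ‖ ^ 2 :=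
    (summable_prod_of_nonneg fun _ => by positivity).2
      ⟨fun i => (hrow i).summable, hS.congr fun i => (hrow i).tsum_eq.symm⟩
  exact ((summable_prod_of_nonneg fun _ => by positivity).1 hprod.prod_symm).2.congr
    fun j => (hcol j).tsum_eq

theorem IsHilbertSchmidt.comp_right {S : E →L[ℂ] E} (hS : IsHilbertSchmidt b S)
    (X : E →L[ℂ] E) : IsHilbertSchmidt b (S ∘L X) := by
  simpa using (hS.adjoint.comp_left (X†)).adjoint

end HilbertSchmidt

theorem IsTraceClass.isHilbertSchmidt {E ι : Type*} [NormedAddCommGroup E]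
    [InnerProductSpace ℂ E] {b : HilbertBasis ι ℂ E} {S : E →L[ℂ] E} (hS : IsTraceClass b S) :
    IsHilbertSchmidt b S := by
  obtain ⟨S₁, S₂, -, hS₂, rfl⟩ := hS
  exact hS₂.comp_left S₁

theorem IsSelfAdjoint.apply_eq_zero_iff_forall_inner_eq_zero {𝕜 E F : Type*} [RCLike 𝕜]
    [NormedAddCommGroup E] [InnerProductSpace 𝕜 E] [CompleteSpace E] [NormedAddCommGroup F]
    [NormedSpace 𝕜 F] {P : E →L[𝕜] E} {V : E →L[𝕜] F} (hPsa : IsSelfAdjoint P)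
    (hPker : ∀ x, V (P x) = 0) (hPid : ∀ x, V x = 0 → P x = x) (y : E) :
    P y = 0 ↔ ∀ z, V z = 0 → ⟪y, z⟫_𝕜 = 0 := by
  have hsymm : ∀ u v, ⟪P u, v⟫_𝕜 = ⟪u, P v⟫_𝕜 := fun u v => hPsa.isSymmetric u v
  refine ⟨fun hy z hz => ?_, fun h => ?_⟩
  · rw [← hPid z hz, ← hsymm, hy, inner_zero_left]
  · refine (inner_self_eq_zero (𝕜 := 𝕜)).1 ?_
    rw [hsymm, hPid _ (hPker y)]
    exact h _ (hPker y)

section KreinForm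

variable {E : Type*} [NormedAddCommGroup E] [InnerProductSpace ℂ E]

-- the Krein form `[x, x] = ⟪J x, x⟫`, real when `J` is selfadjoint
def kreinSq (J : E →L[ℂ] E) (x : E) : ℝ := (⟪J x, x⟫_ℂ).re

theorem kreinSq_add [CompleteSpace E] {J : E →L[ℂ] E} (hJ : IsSelfAdjoint J) (u v : E) :
    kreinSq J (u + v) = kreinSq J u + kreinSq J v + 2 * (⟪J u, v⟫_ℂ).re := by
  have hswap : ⟪J v, u⟫_ℂ = conj ⟪J u, v⟫_ℂ :=
    (hJ.isSymmetric v u).trans (inner_conj_symm v (J u)).symm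
  simp only [kreinSq, map_add, inner_add_left, inner_add_right, Complex.add_re, hswap,
    Complex.conj_re]
  ring

theorem kreinSq_smul (J : E →L[ℂ] E) (c : ℂ) (u : E) :
    kreinSq J (c • u) = Complex.normSq c * kreinSq J u := by
  simp only [kreinSq, map_smul, inner_smul_left, inner_smul_right, ← mul_assoc,
    Complex.mul_conj, Complex.re_ofReal_mul]

theorem abs_kreinSq_le (J : E →L[ℂ] E) (u : E) : |kreinSq J u| ≤ ‖J‖ * ‖u‖ ^ 2 :=
  calc |kreinSq J u| ≤ ‖⟪J u, u⟫_ℂ‖ := Complex.abs_re_le_norm _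
    _ ≤ ‖J u‖ * ‖u‖ := norm_inner_le_norm _ _
    _ ≤ ‖J‖ * ‖u‖ * ‖u‖ := by gcongr; exact J.le_opNorm u
    _ = ‖J‖ * ‖u‖ ^ 2 := by ring

end KreinForm

section Krein

variable {J : H →L[ℂ] H} {ι : Type*} {b : HilbertBasis ι ℂ H}

theorem trJ_splineOp (hJ2 : J ∘L J = 1) (T X : H →L[ℂ] H) :
    trJ J b (splineOp J T X) = ∑' i, kreinSq J (T (X (b i))) := by
  have hJJ (u : H) : J (J u) = u := congr($hJ2 u)
  refine tsum_congr fun i => ?_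
  simp only [splineOp, kadj, comp_apply, hJJ, adjoint_inner_left, kreinSq]

theorem summable_kreinSq (J : H →L[ℂ] H) {T : H →L[ℂ] H} (hT : IsHilbertSchmidt b T)
    (X : H →L[ℂ] H) : Summable fun i => kreinSq J (T (X (b i))) :=
  .of_norm_bounded ((hT.comp_right X).mul_left ‖J‖) fun _ => abs_kreinSq_le J _

theorem tsum_kreinSq_add_rankOne (hJ : IsSelfAdjoint J) {T : H →L[ℂ] H}
    (hT : IsHilbertSchmidt b T) (X : H →L[ℂ] H) (i : ι) (w : H) :
    ∑' j, kreinSq J (T ((X + InnerProductSpace.rankOne ℂ w (b i)) (b j))) =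
      ∑' j, kreinSq J (T (X (b j))) + (kreinSq J (T w) + 2 * (⟪J (T (X (b i))), T w⟫_ℂ).re) := by
  classical
  rw [← ((summable_kreinSq J hT X).hasSum.add (hasSum_ite_eq i _)).tsum_eq]
  refine tsum_congr fun j => ?_
  obtain rfl | hji := eq_or_ne j i
  · simp [b.orthonormal.1 j, kreinSq_add hJ, add_assoc]
  · simp [hji, b.orthonormal.2 hji.symm]

theorem inner_eq_zero_of_forall_trJ_le (hJsa : IsSelfAdjoint J) (hJ2 : J ∘L J = 1)
    {T V X₀ : H →L[ℂ] H} (hT : IsHilbertSchmidt b T)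
    (hmin : ∀ X, V ∘L X = V ∘L X₀ → trJ J b (splineOp J T X₀) ≤ trJ J b (splineOp J T X))
    {z : H} (hz : V z = 0) (x : H) : ⟪J (T (X₀ x)), T z⟫_ℂ = 0 := by
  have hbasis (i : ι) : ⟪J (T (X₀ (b i))), T z⟫_ℂ = 0 := by
    refine Complex.eq_zero_of_forall_normSq_mul_add_re_nonneg (q := kreinSq J (T z)) fun c => ?_
    have hV : V ∘L (X₀ + InnerProductSpace.rankOne ℂ (c • z) (b i)) = V ∘L X₀ := by
      ext; simp [hz]
    have hle := hmin _ hV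
    rw [trJ_splineOp hJ2, trJ_splineOp hJ2, tsum_kreinSq_add_rankOne hJsa hT, map_smul,
      kreinSq_smul J, inner_smul_right] at hle
    linarith
  have hφ : innerSL ℂ (T z) ∘L J ∘L T ∘L X₀ = 0 :=
    ext_on (Submodule.dense_iff_topologicalClosure_eq_top.2 b.dense_span) <| by
      rintro _ ⟨i, rfl⟩
      simp [← inner_conj_symm (T z), hbasis i]
  have hx : ⟪T z, J (T (X₀ x))⟫_ℂ = 0 := congr($hφ x)
  rw [← inner_conj_symm, hx, map_zero]

theorem trJ_splineOp_le_of_forall_inner_eq_zero (hJsa : IsSelfAdjoint J) (hJ2 : J ∘L J = 1)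
    {T V X₀ X : H →L[ℂ] H} (hT : IsHilbertSchmidt b T)
    (hnn : ∀ z, V z = 0 → 0 ≤ kreinSq J (T z))
    (horth : ∀ x z, V z = 0 → ⟪J (T (X₀ x)), T z⟫_ℂ = 0) (hX : V ∘L X = V ∘L X₀) :
    trJ J b (splineOp J T X₀) ≤ trJ J b (splineOp J T X) := by
  rw [trJ_splineOp hJ2, trJ_splineOp hJ2]
  refine (summable_kreinSq J hT X₀).tsum_le_tsum (fun i => ?_) (summable_kreinSq J hT X)
  have hd : V (X (b i) - X₀ (b i)) = 0 := by
    rw [map_sub, sub_eq_zero]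
    exact congr($hX (b i))
  rw [← add_sub_cancel (X₀ (b i)) (X (b i)), map_add, kreinSq_add hJsa, horth _ _ hd,
    Complex.zero_re, mul_zero, add_zero]
  linarith [hnn _ hd]

end Krein

section NormalEquation

variable {F : Type*} [NormedAddCommGroup F] [NormedSpace ℂ F] {J P : H →L[ℂ] H} {V : H →L[ℂ] F}

theorem inner_apply_kadj_comp_self_apply (hJsa : IsSelfAdjoint J) (hJ2 : J ∘L J = 1)
    (T : H →L[ℂ] H) (w m : H) : ⟪J w, (kadj J T ∘L T) m⟫_ℂ = ⟪J (T w), T m⟫_ℂ := by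
  have hJJ (u : H) : J (J u) = u := congr($hJ2 u)
  have hJsymm (u v : H) : ⟪J u, v⟫_ℂ = ⟪u, J v⟫_ℂ := hJsa.isSymmetric u v
  simp only [kadj, comp_apply]
  rw [← hJsymm, hJJ, adjoint_inner_right, hJsymm]

-- `(J ∘ P ∘ J) ∘ T^#T ∘ X = 0` is the normal equation of the operator spline problem.
theorem normalEq_apply_eq_zero_iff (hJ2 : J ∘L J = 1) (hPsa : IsSelfAdjoint P)
    (hPker : ∀ x, V (P x) = 0) (hPid : ∀ x, V x = 0 → P x = x) (T : H →L[ℂ] H) (y : H) :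
    (J ∘L P ∘L J) ((kadj J T ∘L T) y) = 0 ↔ ∀ m, V m = 0 → ⟪J (T y), T m⟫_ℂ = 0 := by
  have hJJ (u : H) : J (J u) = u := congr($hJ2 u)
  have hJ_eq_zero {u : H} : J u = 0 ↔ u = 0 :=
    ⟨fun h => by rw [← hJJ u, h, map_zero], fun h => by rw [h, map_zero]⟩
  simp only [comp_apply, hJ_eq_zero, hPsa.apply_eq_zero_iff_forall_inner_eq_zero hPker hPid,
    kadj, hJJ, adjoint_inner_left]

theorem normalEq_iff (hJ2 : J ∘L J = 1) (hPsa : IsSelfAdjoint P)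
    (hPker : ∀ x, V (P x) = 0) (hPid : ∀ x, V x = 0 → P x = x) (T X : H →L[ℂ] H) :
    (J ∘L P ∘L J) ∘L ((kadj J T ∘L T) ∘L X) = 0 ↔
      ∀ x m, V m = 0 → ⟪J (T (X x)), T m⟫_ℂ = 0 := by
  rw [ContinuousLinearMap.ext_iff]
  exact forall_congr' fun x => normalEq_apply_eq_zero_iff hJ2 hPsa hPker hPid T (X x)

theorem exists_normalEq_of_forall_exists_add (hJsa : IsSelfAdjoint J) (hJ2 : J ∘L J = 1)
    (hPsa : IsSelfAdjoint P) (hPker : ∀ x, V (P x) = 0) (hPid : ∀ x, V x = 0 → P x = x)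
    {T D : H →L[ℂ] H}
    (h : ∀ x, ∃ z w, V z = 0 ∧ (∀ m, V m = 0 → ⟪J w, (kadj J T ∘L T) m⟫_ℂ = 0) ∧
      D x = z + w) :
    ∃ Y : H →L[ℂ] H, (J ∘L P ∘L J) ∘L ((kadj J T ∘L T) ∘L (P ∘L Y + D)) = 0 := by
  set G := (J ∘L P ∘L J) ∘L (kadj J T ∘L T)
  obtain ⟨Y, hY⟩ := (G ∘L P).exists_comp_eq_of_forall_exists_apply_eq (-(G ∘L D)) fun x => by
    obtain ⟨z, w, hz, hw, hx⟩ := h x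
    have hGw : G w = 0 := (normalEq_apply_eq_zero_iff hJ2 hPsa hPker hPid T w).2 fun m hm =>
      (inner_apply_kadj_comp_self_apply hJsa hJ2 T w m).symm.trans (hw m hm)
    exact ⟨-z, by simp [hPid z hz, hx, hGw]⟩
  refine ⟨Y, ?_⟩
  rw [← comp_assoc, comp_add, ← comp_assoc, hY, neg_add_cancel]

end NormalEquation

theorem stmt10_general {ι : Type*}
    (J : H →L[ℂ] H) (hJsa : IsSelfAdjoint J) (hJ2 : J ∘L J = 1)
    (b : HilbertBasis ι ℂ H)
    (T V B₀ : H →L[ℂ] H)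
    (hTtc : IsTraceClass b T)
    (hnn : ∀ z : H, V z = 0 → 0 ≤ (inner ℂ (J (T z)) (T z) : ℂ).re)
    (P : H →L[ℂ] H) (hPker : ∀ x : H, V (P x) = 0)
    (hPid : ∀ x : H, V x = 0 → P x = x) (hPsa : IsSelfAdjoint P)
    (D : H →L[ℂ] H) (hD : V ∘L D = B₀) :
    (List.TFAE
      [ -- (i) the operator spline problem has a solution
        ∃ X₀ : H →L[ℂ] H, V ∘L X₀ = B₀ ∧ ∀ X : H →L[ℂ] H, V ∘L X = B₀ →
          trJ J b (splineOp J T X₀) ≤ trJ J b (splineOp J T X),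
        -- (ii) `ran D ⊆ ker V + [T^#T(ker V)]^{[⊥]}`
        ∀ x : H, ∃ z w : H, V z = 0 ∧
          (∀ m : H, V m = 0 → (inner ℂ (J w) ((kadj J T ∘L T) m) : ℂ) = 0) ∧
          D x = z + w,
        -- (iii) the normal equation `(J∘P∘J) T^#T (PY + D) = 0` has a solution
        ∃ Y : H →L[ℂ] H,
          (J ∘L P ∘L J) ∘L ((kadj J T ∘L T) ∘L (P ∘L Y + D)) = 0 ])
    ∧
    ∀ Y : H →L[ℂ] H,
      (J ∘L P ∘L J) ∘L ((kadj J T ∘L T) ∘L (P ∘L Y + D)) = 0 →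
      (V ∘L (P ∘L Y + D) = B₀ ∧
        ∀ X : H →L[ℂ] H, V ∘L X = B₀ →
          trJ J b (splineOp J T (P ∘L Y + D)) ≤ trJ J b (splineOp J T X)) := by
  have hT := hTtc.isHilbertSchmidt
  have hsolution (Y : H →L[ℂ] H)
      (hY : (J ∘L P ∘L J) ∘L ((kadj J T ∘L T) ∘L (P ∘L Y + D)) = 0) :
      V ∘L (P ∘L Y + D) = B₀ ∧ ∀ X : H →L[ℂ] H, V ∘L X = B₀ →
        trJ J b (splineOp J T (P ∘L Y + D)) ≤ trJ J b (splineOp J T X) := by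
    have hV : V ∘L (P ∘L Y + D) = B₀ := by
      ext x
      simp [hPker, ← hD]
    exact ⟨hV, fun X hX => trJ_splineOp_le_of_forall_inner_eq_zero hJsa hJ2 hT hnn
      ((normalEq_iff hJ2 hPsa hPker hPid T _).1 hY) (hX.trans hV.symm)⟩
  refine ⟨?_, hsolution⟩
  tfae_have 1 → 2 := by
    rintro ⟨X₀, hX₀, hX₀min⟩ x
    refine ⟨D x - X₀ x, X₀ x, ?_, fun m hm => ?_, (sub_add_cancel _ _).symm⟩
    · rw [map_sub, sub_eq_zero]
      exact congr($hD x).trans congr($hX₀ x).symm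
    · rw [inner_apply_kadj_comp_self_apply hJsa hJ2]
      exact inner_eq_zero_of_forall_trJ_le hJsa hJ2 hT
        (fun X hX => hX₀min X (hX.trans hX₀)) hm x
  tfae_have 2 → 3 := exists_normalEq_of_forall_exists_add hJsa hJ2 hPsa hPker hPid
  tfae_have 3 → 1 := fun ⟨Y, hY⟩ => ⟨_, hsolution Y hY⟩
  tfae_finish

/-- for trace-class `T`, `ran B₀ ⊆ ran V`, `T(ker V)` nonnegative, `P` the
orthogonal projection onto `ker V` and `D` the reduced Douglas solution of `VX = B₀`,
the operator spline problem (i), the range inclusion (ii) and the normal equation (iii)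
are equivalent; moreover, for any solution `Y` of (iii), `X₀ := PY + D` attains the
minimum in (i). -/
theorem stmt10 {ι : Type*}
    [TopologicalSpace.SeparableSpace H]
    (J : H →L[ℂ] H) (hJsa : IsSelfAdjoint J) (hJ2 : J ∘L J = 1)
    (b : HilbertBasis ι ℂ H)
    (T V B₀ : H →L[ℂ] H)
    (hTtc : IsTraceClass b T)
    (hran : ∀ x : H, ∃ y : H, V y = B₀ x)
    (hnn : ∀ z : H, V z = 0 → 0 ≤ (inner ℂ (J (T z)) (T z) : ℂ).re)
    (P : H →L[ℂ] H) (hPker : ∀ x : H, V (P x) = 0)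
    (hPid : ∀ x : H, V x = 0 → P x = x) (hPsa : IsSelfAdjoint P)
    (D : H →L[ℂ] H) (hD : V ∘L D = B₀)
    (hDran : ∀ x y : H, V y = 0 → (inner ℂ (D x) y : ℂ) = 0) :
    (List.TFAE
      [ -- (i) the operator spline problem has a solution
        ∃ X₀ : H →L[ℂ] H, V ∘L X₀ = B₀ ∧ ∀ X : H →L[ℂ] H, V ∘L X = B₀ →
          trJ J b (splineOp J T X₀) ≤ trJ J b (splineOp J T X),
        -- (ii) `ran D ⊆ ker V + [T^#T(ker V)]^{[⊥]}`
        ∀ x : H, ∃ z w : H, V z = 0 ∧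
          (∀ m : H, V m = 0 → (inner ℂ (J w) ((kadj J T ∘L T) m) : ℂ) = 0) ∧
          D x = z + w,
        -- (iii) the normal equation `(J∘P∘J) T^#T (PY + D) = 0` has a solution
        ∃ Y : H →L[ℂ] H,
          (J ∘L P ∘L J) ∘L ((kadj J T ∘L T) ∘L (P ∘L Y + D)) = 0 ])
    ∧
    ∀ Y : H →L[ℂ] H,
      (J ∘L P ∘L J) ∘L ((kadj J T ∘L T) ∘L (P ∘L Y + D)) = 0 →
      (V ∘L (P ∘L Y + D) = B₀ ∧
        ∀ X : H →L[ℂ] H, V ∘L X = B₀ →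
          trJ J b (splineOp J T (P ∘L Y + D)) ≤ trJ J b (splineOp J T X)) :=
  stmt10_general J hJsa hJ2 b T V B₀ hTtc hnn P hPker hPid hPsa D hD
end
end

section
/- Let T, V, B₀ ∈ L(H), let ρ ∈ ℝ with ρ ≠ 0, and let X₀ ∈ L(H). Then the following are equivalent: (a) for every X ∈ L(H), the operator ((TX)^#(TX) + ρ(VX−B₀)^#(VX−B₀)) − ((TX₀)^#(TX₀) + ρ(VX₀−B₀)^#(VX₀−B₀)) is Krein-positive; (b) T^#T + ρV^#V is Krein-positive and (T^#T + ρV^#V) X₀ = ρ V^# B₀. -/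
/-!
Write `A = T^#T + ρV^#V` (`smoothGram`), `C = AX₀ - ρV^#B₀` (`smoothResidual`) and
`D = X - X₀`. Expanding the squares gives
`smoothOp X - smoothOp X₀ = D^#AD + D^#C + C^#D`, which is Krein-selfadjoint for every `X`, with
Krein form `[ADx, Dx] + 2 Re [Cx, Dx]`. Since `D` is arbitrary, `Dx` is an arbitrary vector `w`
for any fixed `x ≠ 0`, so (a) yields `[Aw, w] + 2 Re [Cx, w] ≥ 0` for all `w`; replacing `w` by
`t • w` with `t` real, the discriminant of this quadratic in `t` forces the linear term to
vanish, hence `C = 0`. Then `D = 1` gives the Krein-positivity of `A`. Conversely, if `C = 0`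
the form reduces to `[ADx, Dx] ≥ 0`.
-/

open ContinuousLinearMap

noncomputable section

variable {H : Type*} [NormedAddCommGroup H] [InnerProductSpace ℂ H] [CompleteSpace H]

/-- An operator `S ∈ L(H)` is Krein-positive: `S^# = S` and `[Sx,x] ≥ 0` for all `x`. -/
def KreinPositive (J S : H →L[ℂ] H) : Prop :=
  kadj J S = S ∧ ∀ x : H, 0 ≤ (inner ℂ (J (S x)) x : ℂ).re

/-- The smoothing error operator `(TX)^#(TX) + ρ(VX−B₀)^#(VX−B₀)`. -/
def smoothOp (J T V B₀ : H →L[ℂ] H) (ρ : ℝ) (X : H →L[ℂ] H) : H →L[ℂ] H :=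
  kadj J (T ∘L X) ∘L (T ∘L X) +
    (ρ : ℂ) • (kadj J (V ∘L X - B₀) ∘L (V ∘L X - B₀))

lemma eq_zero_of_forall_re_inner_add_nonneg {𝕜 E : Type*} [RCLike 𝕜] [NormedAddCommGroup E]
    [InnerProductSpace 𝕜 E] (B : E →ₗ[𝕜] E) (u : E)
    (h : ∀ w, 0 ≤ RCLike.re (inner 𝕜 (B w) w) + 2 * RCLike.re (inner 𝕜 u w)) : u = 0 := by
  have hquad : ∀ t : ℝ, 0 ≤ RCLike.re (inner 𝕜 (B u) u) * (t * t) + 2 * ‖u‖ ^ 2 * t + 0 := by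
    intro t
    have := h ((t : 𝕜) • u)
    simp only [map_smul, inner_smul_left, inner_smul_right, RCLike.conj_ofReal, ← mul_assoc,
      ← RCLike.ofReal_mul, RCLike.re_ofReal_mul, inner_self_eq_norm_sq] at this
    linarith
  have := discrim_le_zero hquad
  rw [discrim] at this
  have : ‖u‖ ^ 2 = 0 := by nlinarith [sq_nonneg (‖u‖ ^ 2)]
  simpa using this

lemma SeparatingDual.exists_continuousLinearMap_apply_eq {R V : Type*} [Field R]
    [TopologicalSpace R] [IsTopologicalRing R] [AddCommGroup V] [TopologicalSpace V] [Module R V]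
    [ContinuousSMul R V] [SeparatingDual R V] {x : V} (hx : x ≠ 0) (w : V) :
    ∃ Y : V →L[R] V, Y x = w := by
  obtain ⟨f, hf⟩ := SeparatingDual.exists_eq_one (R := R) hx
  exact ⟨f.smulRight w, by simp [hf]⟩

lemma ContinuousLinearMap.apply_apply_of_comp_eq_one {R M : Type*} [Semiring R] [AddCommMonoid M]
    [TopologicalSpace M] [Module R M] {f : M →L[R] M} (h : f ∘L f = 1) (x : M) : f (f x) = x :=
  DFunLike.congr_fun h x

namespace Krein

variable {J : H →L[ℂ] H}

lemma kadj_add (S W : H →L[ℂ] H) : kadj J (S + W) = kadj J S + kadj J W := by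
  simp only [kadj, map_add, add_comp, comp_add]

lemma kadj_sub (S W : H →L[ℂ] H) : kadj J (S - W) = kadj J S - kadj J W := by
  simp only [kadj, map_sub, sub_comp, comp_sub]

lemma kadj_ofReal_smul (r : ℝ) (S : H →L[ℂ] H) : kadj J ((r : ℂ) • S) = (r : ℂ) • kadj J S := by
  simp only [kadj, ← star_eq_adjoint, star_smul, Complex.star_def, Complex.conj_ofReal,
    smul_comp, comp_smul]

lemma kadj_comp (hJ2 : J ∘L J = 1) (S W : H →L[ℂ] H) :
    kadj J (S ∘L W) = kadj J W ∘L kadj J S := by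
  simp only [kadj, adjoint_comp]
  calc J ∘L (adjoint W ∘L adjoint S) ∘L J
      = J ∘L adjoint W ∘L (J ∘L J) ∘L adjoint S ∘L J := by rw [hJ2, one_def, id_comp, comp_assoc]
    _ = (J ∘L adjoint W ∘L J) ∘L J ∘L adjoint S ∘L J := by simp only [comp_assoc]

lemma kadj_kadj (hJsa : IsSelfAdjoint J) (hJ2 : J ∘L J = 1) (S : H →L[ℂ] H) :
    kadj J (kadj J S) = S := by
  simp only [kadj, adjoint_comp, adjoint_adjoint, hJsa.adjoint_eq]
  calc J ∘L (J ∘L S ∘L J) ∘L J = (J ∘L J) ∘L S ∘L (J ∘L J) := by simp only [comp_assoc]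
    _ = S := by rw [hJ2, one_def, id_comp, comp_id]

lemma kadj_comp_self (hJsa : IsSelfAdjoint J) (hJ2 : J ∘L J = 1) (S : H →L[ℂ] H) :
    kadj J (kadj J S ∘L S) = kadj J S ∘L S := by
  rw [kadj_comp hJ2, kadj_kadj hJsa hJ2]

lemma inner_apply_kadj_apply (hJ2 : J ∘L J = 1) (S : H →L[ℂ] H) (x y : H) :
    inner ℂ (J (kadj J S x)) y = inner ℂ (J x) (S y) := by
  simp only [kadj, comp_apply, apply_apply_of_comp_eq_one hJ2, adjoint_inner_left]

lemma re_inner_apply_comm (hJsa : IsSelfAdjoint J) (x y : H) :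
    (inner ℂ (J x) y).re = (inner ℂ (J y) x).re := by
  rw [← inner_conj_symm, Complex.conj_re, ← adjoint_inner_left, hJsa.adjoint_eq]

end Krein

open Krein

section Smoothing

variable (J T V B₀ : H →L[ℂ] H) (ρ : ℝ)

def smoothGram : H →L[ℂ] H := kadj J T ∘L T + (ρ : ℂ) • (kadj J V ∘L V)

def smoothResidual (X₀ : H →L[ℂ] H) : H →L[ℂ] H :=
  smoothGram J T V ρ ∘L X₀ - (ρ : ℂ) • (kadj J V ∘L B₀)

def IsKreinMinimizer (X₀ : H →L[ℂ] H) : Prop :=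
  ∀ X, KreinPositive J (smoothOp J T V B₀ ρ X - smoothOp J T V B₀ ρ X₀)

variable {J T V B₀ ρ}

lemma kadj_smoothGram (hJsa : IsSelfAdjoint J) (hJ2 : J ∘L J = 1) :
    kadj J (smoothGram J T V ρ) = smoothGram J T V ρ := by
  simp only [smoothGram, kadj_add, kadj_ofReal_smul, kadj_comp_self hJsa hJ2]

lemma kadj_smoothOp (hJsa : IsSelfAdjoint J) (hJ2 : J ∘L J = 1) (X : H →L[ℂ] H) :
    kadj J (smoothOp J T V B₀ ρ X) = smoothOp J T V B₀ ρ X := by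
  simp only [smoothOp, kadj_add, kadj_ofReal_smul, kadj_comp_self hJsa hJ2]

lemma smoothOp_sub_smoothOp (hJsa : IsSelfAdjoint J) (hJ2 : J ∘L J = 1) (X X₀ : H →L[ℂ] H) :
    smoothOp J T V B₀ ρ X - smoothOp J T V B₀ ρ X₀ =
      kadj J (X - X₀) ∘L smoothGram J T V ρ ∘L (X - X₀) +
        kadj J (X - X₀) ∘L smoothResidual J T V B₀ ρ X₀ +
        kadj J (smoothResidual J T V B₀ ρ X₀) ∘L (X - X₀) := by
  simp only [smoothOp, smoothResidual, smoothGram, kadj_comp hJ2, kadj_sub, kadj_add,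
    kadj_ofReal_smul, kadj_kadj hJsa hJ2, comp_add, add_comp, comp_sub, sub_comp, smul_comp,
    comp_smul, comp_assoc, smul_sub]
  module

lemma re_inner_smoothOp_sub_smoothOp (hJsa : IsSelfAdjoint J) (hJ2 : J ∘L J = 1)
    (X X₀ : H →L[ℂ] H) (x : H) :
    (inner ℂ (J ((smoothOp J T V B₀ ρ X - smoothOp J T V B₀ ρ X₀) x)) x).re =
      (inner ℂ (J (smoothGram J T V ρ ((X - X₀) x))) ((X - X₀) x)).re +
        2 * (inner ℂ (J (smoothResidual J T V B₀ ρ X₀ x)) ((X - X₀) x)).re := by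
  rw [smoothOp_sub_smoothOp hJsa hJ2]
  simp only [add_apply, comp_apply, map_add, inner_add_left, Complex.add_re,
    inner_apply_kadj_apply hJ2, re_inner_apply_comm hJsa ((X - X₀) x)]
  ring

lemma IsKreinMinimizer.smoothResidual_eq_zero (hJsa : IsSelfAdjoint J) (hJ2 : J ∘L J = 1)
    {X₀ : H →L[ℂ] H} (h : IsKreinMinimizer J T V B₀ ρ X₀) :
    smoothResidual J T V B₀ ρ X₀ = 0 := by
  ext x
  rcases eq_or_ne x 0 with rfl | hx
  · simp
  suffices J (smoothResidual J T V B₀ ρ X₀ x) = 0 by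
    simpa [apply_apply_of_comp_eq_one hJ2] using congr(J $this)
  refine eq_zero_of_forall_re_inner_add_nonneg (J ∘L smoothGram J T V ρ : H →ₗ[ℂ] H) _ fun w ↦ ?_
  obtain ⟨Y, hY⟩ := SeparatingDual.exists_continuousLinearMap_apply_eq (R := ℂ) hx w
  have := (h (X₀ + Y)).2 x
  rwa [re_inner_smoothOp_sub_smoothOp hJsa hJ2, add_sub_cancel_left, hY] at this

lemma IsKreinMinimizer.kreinPositive_smoothGram (hJsa : IsSelfAdjoint J) (hJ2 : J ∘L J = 1)
    {X₀ : H →L[ℂ] H} (h : IsKreinMinimizer J T V B₀ ρ X₀) :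
    KreinPositive J (smoothGram J T V ρ) := by
  refine ⟨kadj_smoothGram hJsa hJ2, fun x ↦ ?_⟩
  have := (h (X₀ + 1)).2 x
  rwa [re_inner_smoothOp_sub_smoothOp hJsa hJ2, add_sub_cancel_left,
    h.smoothResidual_eq_zero hJsa hJ2, zero_apply, map_zero, inner_zero_left, Complex.zero_re,
    mul_zero, add_zero, one_apply_eq_self] at this

lemma isKreinMinimizer_of_smoothResidual_eq_zero (hJsa : IsSelfAdjoint J) (hJ2 : J ∘L J = 1)
    {X₀ : H →L[ℂ] H} (hA : KreinPositive J (smoothGram J T V ρ))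
    (hC : smoothResidual J T V B₀ ρ X₀ = 0) : IsKreinMinimizer J T V B₀ ρ X₀ := fun X ↦ by
  refine ⟨by rw [kadj_sub, kadj_smoothOp hJsa hJ2, kadj_smoothOp hJsa hJ2], fun x ↦ ?_⟩
  rw [re_inner_smoothOp_sub_smoothOp hJsa hJ2, hC, zero_apply, map_zero, inner_zero_left,
    Complex.zero_re, mul_zero, add_zero]
  exact hA.2 _

end Smoothing

theorem stmt14_general
    (J : H →L[ℂ] H) (hJsa : IsSelfAdjoint J) (hJ2 : J ∘L J = 1)
    (T V B₀ : H →L[ℂ] H) (ρ : ℝ) (X₀ : H →L[ℂ] H) :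
    (∀ X : H →L[ℂ] H,
        KreinPositive J (smoothOp J T V B₀ ρ X - smoothOp J T V B₀ ρ X₀)) ↔
      (KreinPositive J (kadj J T ∘L T + (ρ : ℂ) • (kadj J V ∘L V)) ∧
        (kadj J T ∘L T + (ρ : ℂ) • (kadj J V ∘L V)) ∘L X₀ =
          (ρ : ℂ) • (kadj J V ∘L B₀)) := by
  change IsKreinMinimizer J T V B₀ ρ X₀ ↔
    KreinPositive J (smoothGram J T V ρ) ∧ smoothGram J T V ρ ∘L X₀ = _
  rw [← sub_eq_zero, ← smoothResidual]
  exact ⟨fun h ↦ ⟨h.kreinPositive_smoothGram hJsa hJ2, h.smoothResidual_eq_zero hJsa hJ2⟩,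
    fun ⟨hA, hC⟩ ↦ isKreinMinimizer_of_smoothResidual_eq_zero hJsa hJ2 hA hC⟩

/-- `X₀` is a Krein-order minimizer of
`X ↦ (TX)^#(TX) + ρ(VX−B₀)^#(VX−B₀)` iff `T^#T + ρV^#V` is Krein-positive and
`(T^#T + ρV^#V)X₀ = ρV^#B₀`. -/
theorem stmt14
    [TopologicalSpace.SeparableSpace H]
    (J : H →L[ℂ] H) (hJsa : IsSelfAdjoint J) (hJ2 : J ∘L J = 1)
    (T V B₀ : H →L[ℂ] H) (ρ : ℝ) (hρ : ρ ≠ 0) (X₀ : H →L[ℂ] H) :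
    (∀ X : H →L[ℂ] H,
        KreinPositive J (smoothOp J T V B₀ ρ X - smoothOp J T V B₀ ρ X₀)) ↔
      (KreinPositive J (kadj J T ∘L T + (ρ : ℂ) • (kadj J V ∘L V)) ∧
        (kadj J T ∘L T + (ρ : ℂ) • (kadj J V ∘L V)) ∘L X₀ =
          (ρ : ℂ) • (kadj J V ∘L B₀)) :=
  stmt14_general J hJsa hJ2 T V B₀ ρ X₀
end
end

section
/- Let A ∈ L(H), ρ ∈ ℝ with ρ ≠ 0, let W₁₁, W₂₂ ∈ L(H) be Krein-selfadjoint and let W₁₂ ∈ L(H). For h, x ∈ H define the real quadratic functional Q_h(x) := [W₁₁x + W₁₂(Ax−h), x] + ρ[ρ^{-1}W₁₂^#x + W₂₂(Ax−h), Ax−h], and call G ∈ L(H) an indefinite W-optimal inverse of A if Q_h(Gh) ≤ Q_h(x) for every h, x ∈ H. Then A admits an indefinite W-optimal inverse if and only if S := W₁₁ + W₁₂A + A^#W₁₂^# + ρA^#W₂₂A is Krein-positive and the equation SX = W₁₂ + ρA^#W₂₂ admits a solution X ∈ L(H). In this case, G ∈ L(H) is an indefinite W-optimal inverse of A if and only if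 SG = W₁₂ + ρA^#W₂₂. -/
open ContinuousLinearMap

noncomputable section

variable {H : Type*} [NormedAddCommGroup H] [InnerProductSpace ℂ H] [CompleteSpace H]

/-- The real quadratic functional
`Q_h(x) = [W₁₁x + W₁₂(Ax−h), x] + ρ[ρ⁻¹W₁₂^#x + W₂₂(Ax−h), Ax−h]`. -/
def Qfun (J A W₁₁ W₁₂ W₂₂ : H →L[ℂ] H) (ρ : ℝ) (h x : H) : ℝ :=
  (inner ℂ (J (W₁₁ x + W₁₂ (A x - h))) x : ℂ).re +
    ρ * (inner ℂ (J ((ρ : ℂ)⁻¹ • kadj J W₁₂ x + W₂₂ (A x - h))) (A x - h) : ℂ).re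

/-!
Expanding `Q_h` gives `Q_h(x) = [Sx, x] - 2 Re [Th, x] + ρ [W₂₂h, h]` with `T = W₁₂ + ρA^#W₂₂`,
and `S` is Krein-selfadjoint. Hence `Q_h(x₀ + t d) - Q_h(x₀) = 2t Re [Sx₀ - Th, d] + t² [Sd, d]`,
which is nonnegative for all real `t` iff `Re [Sx₀ - Th, d] = 0` and `[Sd, d] ≥ 0`. Since the
Krein inner product is nondegenerate, the first condition for all `d` says `Sx₀ = Th`.
-/

lemma ContinuousLinearMap.apply_apply_of_comp_self_eq_one {R M : Type*} [Semiring R]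
    [TopologicalSpace M] [AddCommMonoid M] [Module R M] {f : M →L[R] M} (hf : f ∘L f = 1)
    (x : M) : f (f x) = x :=
  DFunLike.congr_fun hf x

lemma eq_zero_and_nonneg_of_forall_quadratic_nonneg {a q : ℝ}
    (h : ∀ t : ℝ, 0 ≤ 2 * a * t + q * t ^ 2) : a = 0 ∧ 0 ≤ q := by
  have hdisc : discrim q (2 * a) 0 ≤ 0 := discrim_le_zero fun t => by linarith [h t]
  have ha : a = 0 := by
    rw [discrim] at hdisc
    nlinarith [sq_nonneg a]
  refine ⟨ha, ?_⟩
  simpa [ha] using h 1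

section Krein

variable {E : Type*} [NormedAddCommGroup E] [InnerProductSpace ℂ E] {J : E →L[ℂ] E}

def kinner (J : E →L[ℂ] E) (x y : E) : ℂ :=
  inner ℂ (J x) y

lemma eq_zero_of_forall_re_kinner_eq_zero (hJ2 : J ∘L J = 1) {z : E}
    (h : ∀ d, (kinner J z d).re = 0) : z = 0 := by
  have hJz : J z = 0 := re_inner_self_nonpos (𝕜 := ℂ).mp (h (J z)).le
  rw [← apply_apply_of_comp_self_eq_one hJ2 z, hJz, map_zero]

lemma kinner_add_left (x x' y : E) : kinner J (x + x') y = kinner J x y + kinner J x' y := by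
  rw [kinner, map_add, inner_add_left, kinner, kinner]

lemma kinner_sub_left (x x' y : E) : kinner J (x - x') y = kinner J x y - kinner J x' y := by
  rw [kinner, map_sub, inner_sub_left, kinner, kinner]

lemma kinner_sub_right (x y y' : E) : kinner J x (y - y') = kinner J x y - kinner J x y' :=
  inner_sub_right _ _ _

lemma kinner_zero_left (y : E) : kinner J 0 y = 0 := by
  rw [kinner, map_zero, inner_zero_left]

lemma re_kinner_ofReal_smul_left (t : ℝ) (x y : E) :
    (kinner J ((t : ℂ) • x) y).re = t * (kinner J x y).re := by
  rw [kinner, map_smul, inner_smul_left, Complex.conj_ofReal, Complex.re_ofReal_mul, kinner]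

lemma re_kinner_ofReal_smul_right (t : ℝ) (x y : E) :
    (kinner J x ((t : ℂ) • y)).re = t * (kinner J x y).re := by
  rw [kinner, inner_smul_right, Complex.re_ofReal_mul, kinner]

variable [CompleteSpace E]

lemma re_kinner_comm (hJsa : IsSelfAdjoint J) (x y : E) :
    (kinner J x y).re = (kinner J y x).re := by
  conv_lhs => rw [kinner, ← hJsa.adjoint_eq]
  rw [adjoint_inner_left, kinner, ← inner_conj_symm, Complex.conj_re]

lemma kadj_add (S T : E →L[ℂ] E) : kadj J (S + T) = kadj J S + kadj J T := by
  simp only [kadj, map_add, add_comp, comp_add]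

lemma kadj_smul (c : ℂ) (S : E →L[ℂ] E) : kadj J (c • S) = starRingEnd ℂ c • kadj J S := by
  simp only [kadj, map_smulₛₗ, smul_comp, comp_smul]

lemma kadj_comp (hJ2 : J ∘L J = 1) (S T : E →L[ℂ] E) :
    kadj J (S ∘L T) = kadj J T ∘L kadj J S := by
  ext x
  simp only [kadj, adjoint_comp, comp_apply, apply_apply_of_comp_self_eq_one hJ2]

lemma kadj_kadj (hJsa : IsSelfAdjoint J) (hJ2 : J ∘L J = 1) (S : E →L[ℂ] E) :
    kadj J (kadj J S) = S := by
  ext x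
  simp only [kadj, adjoint_comp, hJsa.adjoint_eq, adjoint_adjoint, comp_apply,
    apply_apply_of_comp_self_eq_one hJ2]

lemma kinner_kadj_left (hJ2 : J ∘L J = 1) (S : E →L[ℂ] E) (x y : E) :
    kinner J (kadj J S x) y = kinner J x (S y) := by
  simp only [kinner, kadj, comp_apply, apply_apply_of_comp_self_eq_one hJ2, adjoint_inner_left]

lemma re_kinner_comm_of_kadj_eq (hJsa : IsSelfAdjoint J) (hJ2 : J ∘L J = 1) {S : E →L[ℂ] E}
    (hS : kadj J S = S) (x y : E) : (kinner J (S x) y).re = (kinner J (S y) x).re := by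
  rw [re_kinner_comm hJsa, ← kinner_kadj_left hJ2, hS]

def kquad (J S : E →L[ℂ] E) (y x : E) : ℝ :=
  (kinner J (S x) x).re - 2 * (kinner J y x).re

lemma kquad_add (hJsa : IsSelfAdjoint J) (hJ2 : J ∘L J = 1) {S : E →L[ℂ] E}
    (hS : kadj J S = S) (y x d : E) :
    kquad J S y (x + d) =
      kquad J S y x + 2 * (kinner J (S x - y) d).re + (kinner J (S d) d).re := by
  have hsymm := re_kinner_comm_of_kadj_eq hJsa hJ2 hS d x
  simp only [kquad, kinner, map_add, map_sub, inner_add_left, inner_add_right, inner_sub_left,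
    Complex.add_re, Complex.sub_re] at hsymm ⊢
  linarith

lemma forall_kquad_le_iff (hJsa : IsSelfAdjoint J) (hJ2 : J ∘L J = 1) {S : E →L[ℂ] E}
    (hS : kadj J S = S) (y x₀ : E) :
    (∀ x, kquad J S y x₀ ≤ kquad J S y x) ↔ (∀ d, 0 ≤ (kinner J (S d) d).re) ∧ S x₀ = y := by
  constructor
  · intro hmin
    have hdir (d : E) : (kinner J (S x₀ - y) d).re = 0 ∧ 0 ≤ (kinner J (S d) d).re := by
      refine eq_zero_and_nonneg_of_forall_quadratic_nonneg fun t => ?_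
      have := hmin (x₀ + (t : ℂ) • d)
      simp only [kquad_add hJsa hJ2 hS, map_smul, re_kinner_ofReal_smul_left,
        re_kinner_ofReal_smul_right] at this
      linarith
    refine ⟨fun d => (hdir d).2, sub_eq_zero.mp ?_⟩
    exact eq_zero_of_forall_re_kinner_eq_zero hJ2 fun d => (hdir d).1
  · rintro ⟨hpos, rfl⟩ x
    have := kquad_add hJsa hJ2 hS (S x₀) x₀ (x - x₀)
    rw [add_sub_cancel, sub_self, kinner_zero_left, Complex.zero_re, mul_zero, add_zero] at this
    linarith [hpos (x - x₀)]

end Krein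

section OptimalInverse

variable {J A W₁₁ W₁₂ W₂₂ : H →L[ℂ] H} {ρ : ℝ}

/-- The operator `S` of the paper; `normalRhs` is the right-hand side of `SX = W₁₂ + ρA^#W₂₂`. -/
def normalOp (J A W₁₁ W₁₂ W₂₂ : H →L[ℂ] H) (ρ : ℝ) : H →L[ℂ] H :=
  W₁₁ + W₁₂ ∘L A + kadj J A ∘L kadj J W₁₂ + (ρ : ℂ) • (kadj J A ∘L (W₂₂ ∘L A))

def normalRhs (J A W₁₂ W₂₂ : H →L[ℂ] H) (ρ : ℝ) : H →L[ℂ] H :=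
  W₁₂ + (ρ : ℂ) • (kadj J A ∘L W₂₂)

lemma kadj_normalOp (hJsa : IsSelfAdjoint J) (hJ2 : J ∘L J = 1) (hW₁₁ : kadj J W₁₁ = W₁₁)
    (hW₂₂ : kadj J W₂₂ = W₂₂) :
    kadj J (normalOp J A W₁₁ W₁₂ W₂₂ ρ) = normalOp J A W₁₁ W₁₂ W₂₂ ρ := by
  simp only [normalOp, kadj_add, kadj_smul, kadj_comp hJ2, kadj_kadj hJsa hJ2, hW₁₁, hW₂₂,
    Complex.conj_ofReal, comp_assoc]
  abel

lemma Qfun_eq_kquad (hJsa : IsSelfAdjoint J) (hJ2 : J ∘L J = 1) (hW₂₂ : kadj J W₂₂ = W₂₂)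
    (hρ : ρ ≠ 0) (h x : H) :
    Qfun J A W₁₁ W₁₂ W₂₂ ρ h x =
      kquad J (normalOp J A W₁₁ W₁₂ W₂₂ ρ) (normalRhs J A W₁₂ W₂₂ ρ h) x +
        ρ * (kinner J (W₂₂ h) h).re := by
  change (kinner J _ x).re + ρ * (kinner J _ (A x - h)).re = _
  rw [← Complex.ofReal_inv]
  simp only [kquad, normalOp, normalRhs, add_apply, comp_apply, smul_apply, map_sub,
    kinner_add_left, kinner_sub_left, kinner_sub_right, Complex.add_re,
    Complex.sub_re, re_kinner_ofReal_smul_left, kinner_kadj_left hJ2]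
  have h₁ := re_kinner_comm hJsa x (W₁₂ h)
  have h₂ := re_kinner_comm_of_kadj_eq hJsa hJ2 hW₂₂ (A x) h
  rw [mul_sub, mul_add, mul_add, mul_inv_cancel_left₀ hρ, mul_inv_cancel_left₀ hρ]
  linear_combination -h₁ - ρ * h₂

lemma forall_Qfun_le_iff (hJsa : IsSelfAdjoint J) (hJ2 : J ∘L J = 1) (hW₁₁ : kadj J W₁₁ = W₁₁)
    (hW₂₂ : kadj J W₂₂ = W₂₂) (hρ : ρ ≠ 0) (G : H →L[ℂ] H) :
    (∀ h x, Qfun J A W₁₁ W₁₂ W₂₂ ρ h (G h) ≤ Qfun J A W₁₁ W₁₂ W₂₂ ρ h x) ↔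
      KreinPositive J (normalOp J A W₁₁ W₁₂ W₂₂ ρ) ∧
        normalOp J A W₁₁ W₁₂ W₂₂ ρ ∘L G = normalRhs J A W₁₂ W₂₂ ρ := by
  have hS := kadj_normalOp (A := A) (W₁₂ := W₁₂) (ρ := ρ) hJsa hJ2 hW₁₁ hW₂₂
  simp only [Qfun_eq_kquad hJsa hJ2 hW₂₂ hρ, add_le_add_iff_right,
    forall_kquad_le_iff hJsa hJ2 hS, forall_and, forall_const, KreinPositive, hS, true_and,
    ContinuousLinearMap.ext_iff, comp_apply]
  rfl

end OptimalInverse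

theorem stmt16_general
    (J : H →L[ℂ] H) (hJsa : IsSelfAdjoint J) (hJ2 : J ∘L J = 1)
    (A : H →L[ℂ] H) (ρ : ℝ) (hρ : ρ ≠ 0)
    (W₁₁ W₂₂ W₁₂ : H →L[ℂ] H)
    (hW₁₁ : kadj J W₁₁ = W₁₁) (hW₂₂ : kadj J W₂₂ = W₂₂) :
    ((∃ G : H →L[ℂ] H, ∀ h x : H,
        Qfun J A W₁₁ W₁₂ W₂₂ ρ h (G h) ≤ Qfun J A W₁₁ W₁₂ W₂₂ ρ h x) ↔
      (KreinPositive J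
          (W₁₁ + W₁₂ ∘L A + kadj J A ∘L kadj J W₁₂ +
            (ρ : ℂ) • (kadj J A ∘L (W₂₂ ∘L A))) ∧
        ∃ X : H →L[ℂ] H,
          (W₁₁ + W₁₂ ∘L A + kadj J A ∘L kadj J W₁₂ +
              (ρ : ℂ) • (kadj J A ∘L (W₂₂ ∘L A))) ∘L X =
            W₁₂ + (ρ : ℂ) • (kadj J A ∘L W₂₂)))
    ∧
    ((∃ G : H →L[ℂ] H, ∀ h x : H,
        Qfun J A W₁₁ W₁₂ W₂₂ ρ h (G h) ≤ Qfun J A W₁₁ W₁₂ W₂₂ ρ h x) →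
      ∀ G : H →L[ℂ] H,
        ((∀ h x : H,
            Qfun J A W₁₁ W₁₂ W₂₂ ρ h (G h) ≤ Qfun J A W₁₁ W₁₂ W₂₂ ρ h x) ↔
          (W₁₁ + W₁₂ ∘L A + kadj J A ∘L kadj J W₁₂ +
              (ρ : ℂ) • (kadj J A ∘L (W₂₂ ∘L A))) ∘L G =
            W₁₂ + (ρ : ℂ) • (kadj J A ∘L W₂₂))) := by
  have optimal_iff := forall_Qfun_le_iff (A := A) (W₁₂ := W₁₂) hJsa hJ2 hW₁₁ hW₂₂ hρ
  refine ⟨⟨fun ⟨G, hG⟩ => ?_, fun ⟨hS, X, hX⟩ => ⟨X, (optimal_iff X).2 ⟨hS, hX⟩⟩⟩, ?_⟩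
  · obtain ⟨hS, hG⟩ := (optimal_iff G).1 hG
    exact ⟨hS, G, hG⟩
  · rintro ⟨G₀, hG₀⟩ G
    exact ⟨fun hG => ((optimal_iff G).1 hG).2,
      fun hG => (optimal_iff G).2 ⟨((optimal_iff G₀).1 hG₀).1, hG⟩⟩

/-- `A` admits an indefinite `W`-optimal inverse iff
`S := W₁₁ + W₁₂A + A^#W₁₂^# + ρA^#W₂₂A` is Krein-positive and the equation
`SX = W₁₂ + ρA^#W₂₂` is solvable; in this case the indefinite `W`-optimal inverses of `A`
are exactly the solutions `G` of `SG = W₁₂ + ρA^#W₂₂`. -/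
theorem stmt16
    [TopologicalSpace.SeparableSpace H]
    (J : H →L[ℂ] H) (hJsa : IsSelfAdjoint J) (hJ2 : J ∘L J = 1)
    (A : H →L[ℂ] H) (ρ : ℝ) (hρ : ρ ≠ 0)
    (W₁₁ W₂₂ W₁₂ : H →L[ℂ] H)
    (hW₁₁ : kadj J W₁₁ = W₁₁) (hW₂₂ : kadj J W₂₂ = W₂₂) :
    ((∃ G : H →L[ℂ] H, ∀ h x : H,
        Qfun J A W₁₁ W₁₂ W₂₂ ρ h (G h) ≤ Qfun J A W₁₁ W₁₂ W₂₂ ρ h x) ↔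
      (KreinPositive J
          (W₁₁ + W₁₂ ∘L A + kadj J A ∘L kadj J W₁₂ +
            (ρ : ℂ) • (kadj J A ∘L (W₂₂ ∘L A))) ∧
        ∃ X : H →L[ℂ] H,
          (W₁₁ + W₁₂ ∘L A + kadj J A ∘L kadj J W₁₂ +
              (ρ : ℂ) • (kadj J A ∘L (W₂₂ ∘L A))) ∘L X =
            W₁₂ + (ρ : ℂ) • (kadj J A ∘L W₂₂)))
    ∧
    ((∃ G : H →L[ℂ] H, ∀ h x : H,
        Qfun J A W₁₁ W₁₂ W₂₂ ρ h (G h) ≤ Qfun J A W₁₁ W₁₂ W₂₂ ρ h x) →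
      ∀ G : H →L[ℂ] H,
        ((∀ h x : H,
            Qfun J A W₁₁ W₁₂ W₂₂ ρ h (G h) ≤ Qfun J A W₁₁ W₁₂ W₂₂ ρ h x) ↔
          (W₁₁ + W₁₂ ∘L A + kadj J A ∘L kadj J W₁₂ +
              (ρ : ℂ) • (kadj J A ∘L (W₂₂ ∘L A))) ∘L G =
            W₁₂ + (ρ : ℂ) • (kadj J A ∘L W₂₂))) :=
  stmt16_general J hJsa hJ2 A ρ hρ W₁₁ W₂₂ W₁₂ hW₁₁ hW₂₂
end
end
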